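/- arXiv:1907.07873 — 2 statements merged into one kernel-verified Lean document; each statement's English description precedes it below -/
import Mathlib

section
/- For every z > 0, the digamma function ψ(z) = Γ'(z)/Γ(z) satisfies ψ(z) < log z - 1/(2z). -/
open Set Filter Topology

lemma two_log_lt (u : ℝ) (hu : 1 < u) : 2 * Real.log u < u - u⁻¹ := by
  set F : ℝ → ℝ := fun x => x - x⁻¹ - 2 * Real.log x with hF
  have hmono : StrictMonoOn F (Set.Ici 1) := by
    apply strictMonoOn_of_deriv_pos (convex_Ici 1)
    · apply ContinuousOn.sub (ContinuousOn.sub continuousOn_id ?_) ?_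
      · exact fun x hx => (continuousAt_inv₀ (by simp at hx; linarith)).continuousWithinAt
      · exact fun x hx =>
          ((Real.continuousAt_log (by simp at hx; linarith)).const_smul (2:ℝ)).continuousWithinAt
    · intro x hx
      rw [interior_Ici] at hx
      have hx1 : (1:ℝ) < x := hx
      have hx0 : x ≠ 0 := by linarith
      have hd : HasDerivAt F (1 - -(x^2)⁻¹ - 2 * x⁻¹) x :=
        ((hasDerivAt_id x).sub (hasDerivAt_inv hx0)).sub
          ((Real.hasDerivAt_log hx0).const_mul 2)
      rw [hd.deriv]
      have h : 1 - -(x^2)⁻¹ - 2 * x⁻¹ = (x - 1)^2 / x^2 := by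
        field_simp
        ring
      rw [h]
      exact div_pos (pow_pos (by linarith) 2) (by positivity)
  have h1 : F 1 < F u := hmono (Set.self_mem_Ici) (Set.mem_Ici.mpr hu.le) hu
  have : F 1 = 0 := by simp [hF]
  rw [this] at h1
  simp only [hF] at h1
  linarith

lemma trapezoid (a : ℝ) (ha : 0 < a) :
    Real.log (a + 1) - Real.log a < (1/a + 1/(a+1)) / 2 := by
  have ha1 : (0:ℝ) < a + 1 := by linarith
  have hu : 1 < (a+1)/a := (one_lt_div ha).2 (by linarith)
  have h := two_log_lt ((a+1)/a) hu
  have hlog : Real.log ((a+1)/a) = Real.log (a+1) - Real.log a :=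
    Real.log_div ha1.ne' ha.ne'
  have halg : (a+1)/a - ((a+1)/a)⁻¹ = 2 * ((1/a + 1/(a+1)) / 2) := by
    rw [inv_div]
    field_simp
    ring
  rw [hlog, halg] at h
  linarith

theorem stmt_3 (z : ℝ) (hz : 0 < z) :
    deriv Real.Gamma z / Real.Gamma z < Real.log z - 1 / (2 * z) := by
  set f : ℝ → ℝ := Real.log ∘ Real.Gamma with hf
  have hc : ConvexOn ℝ (Ioi 0) f := Real.convexOn_log_Gamma
  have hne : ∀ {x : ℝ}, 0 < x → ∀ m : ℕ, x ≠ -m :=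
    fun {x} hx m => ((neg_nonpos.mpr m.cast_nonneg).trans_lt hx).ne'
  have hder : ∀ {x : ℝ}, 0 < x → DifferentiableAt ℝ f x := fun {x} hx =>
    (Real.differentiableAt_Gamma (hne hx)).log (Real.Gamma_pos_of_pos hx).ne'
  have h_rec : ∀ x : ℝ, 0 < x → f (x + 1) = f x + Real.log x := by
    intro x hx
    simp only [hf, Function.comp_apply, Real.Gamma_add_one hx.ne',
      Real.log_mul hx.ne' (Real.Gamma_pos_of_pos hx).ne', add_comm]
  have hder_rec : ∀ x : ℝ, 0 < x → deriv f (x + 1) = deriv f x + 1 / x := by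
    intro x hx
    rw [← deriv_comp_add_const, one_div, ← Real.deriv_log,
      ← deriv_add (hder hx) (Real.differentiableAt_log hx.ne')]
    apply Filter.EventuallyEq.deriv_eq
    filter_upwards [eventually_gt_nhds hx] using h_rec
  -- sum formula
  have hsum : ∀ n : ℕ, deriv f (z + n) = deriv f z + ∑ k ∈ Finset.range n, 1 / (z + k) := by
    intro n
    induction n with
    | zero => simp
    | succ n ih =>
      have h1 : z + (n + 1 : ℕ) = (z + n) + 1 := by push_cast; ring
      rw [h1, hder_rec (z + n) (by positivity), ih, Finset.sum_range_succ]
      ring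
  -- upper bound for deriv f
  have hub : ∀ x : ℝ, 0 < x → deriv f x ≤ Real.log x := by
    intro x hx
    have h := hc.deriv_le_slope (mem_Ioi.mpr hx) (mem_Ioi.mpr (by linarith : (0:ℝ) < x + 1))
      (by linarith) (hder hx)
    rwa [slope_def_field, h_rec x hx, add_sub_cancel_left,
      show x + 1 - x = 1 by ring, div_one] at h
  have half : ∀ x : ℝ, 1/(2*x) = (1/x)/2 := fun x => by rw [one_div, mul_inv]; ring
  -- the strictness gap
  set δ : ℝ := (1/z + 1/(z+1)) / 2 - (Real.log (z+1) - Real.log z) with hδdef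
  have hδ : 0 < δ := by
    have := trapezoid z hz
    simp only [hδdef]
    linarith
  -- lower bound for the sum
  have hS : ∀ n : ℕ, 1 ≤ n →
      Real.log (z + n) - Real.log z + (1/(2*z) - 1/(2*(z+n))) + δ
        ≤ ∑ k ∈ Finset.range n, 1 / (z + k) := by
    intro n hn
    induction n, hn using Nat.le_induction with
    | base =>
      rw [Finset.sum_range_one]
      push_cast
      have h1 : (1/z + 1/(z+1)) / 2 = 1/(2*z) + 1/(2*(z+1)) := by
        field_simp
      simp only [hδdef, Nat.cast_zero, add_zero]
      have h2 := half z
      have h3 := half (z+1)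
      linarith
    | succ n hn ih =>
      rw [Finset.sum_range_succ]
      have hzn : (0:ℝ) < z + n := by positivity
      have ht := trapezoid (z + n) hzn
      have h1 : (1/(z+n) + 1/(z+n+1)) / 2 = 1/(2*(z+n)) + 1/(2*(z+n+1)) := by
        field_simp
      push_cast
      push_cast at ih
      rw [show z + ((n:ℝ) + 1) = z + (n:ℝ) + 1 by ring]
      have h2 := half (z+(n:ℝ))
      have h3 := half (z+(n:ℝ)+1)
      have : Real.log (z + n + 1) - Real.log (z + n)
          + (1/(2*(z+n)) - 1/(2*(z+n+1))) ≤ 1/(z+n) := by linarith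
      linarith
  -- choose n large
  obtain ⟨n, hn⟩ := exists_nat_gt (1 / (2 * δ))
  have hn0 : (0:ℝ) < n := lt_trans (by positivity) hn
  have hn1 : 1 ≤ n := Nat.cast_pos.mp hn0
  have h2 : 1 < 2 * δ * n := by
    rw [div_lt_iff₀ (by positivity)] at hn
    linarith
  have hdelta : 1/(2*(z+(n:ℝ))) < δ := by
    rw [div_lt_iff₀ (by positivity)]
    nlinarith [mul_pos hδ hz]
  have hzn : (0:ℝ) < z + n := by positivity
  have hfinal : deriv f z < Real.log z - 1/(2*z) := by
    have e1 := hsum n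
    have e2 := hub (z + n) hzn
    have e3 := hS n hn1
    linarith
  rwa [hf, Function.comp_def,
    deriv.log (Real.differentiableAt_Gamma (hne hz)) (Real.Gamma_pos_of_pos hz).ne'] at hfinal
end

section
/- Let N > 2 be a real number and define f : (1, N/2) → ℝ by f(ξ) = (Γ(N/2 - ξ)/Γ(N/2)) · ((N - (1+ξ))/2)^ξ. Then f is strictly increasing on (1, N/2). -/
/-!
Write `ψ = Γ'/Γ`, `x = N/2 - ξ` and `b = (N - (1 + ξ))/2`, so that `ξ = 2(b - x) + 1` and
`x < b` on `(1, N/2)`. The logarithmic derivative of `f` is `-ψ(x) + log b - ξ/(2b)`.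
The functional equation `ψ(x + 1) = ψ(x) + 1/x`, the convexity bound `ψ(x) ≤ log x` and the
trapezoid bound for `∫ₓ^{x+1} dt/t` give the sharper estimate `ψ(x) ≤ log x - 1/(2x)`; together
with `log x - log b ≤ x/b - 1` this makes the logarithmic derivative at least
`1/(2x) - 1/(2b) > 0`.
-/

open Real Set Filter Topology

namespace Real

lemma hasDerivAt_log_Gamma {x : ℝ} (hx : 0 < x) :
    HasDerivAt (fun t => log (Gamma t)) (logDeriv Gamma x) x := by
  have hΓ : HasDerivAt Gamma (deriv Gamma x) x :=
    (differentiableAt_Gamma fun m => ((neg_nonpos.mpr m.cast_nonneg).trans_lt hx).ne').hasDerivAt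
  simpa only [logDeriv_apply] using hΓ.log (Gamma_pos_of_pos hx).ne'

lemma logDeriv_Gamma_add_one {x : ℝ} (hx : 0 < x) :
    logDeriv Gamma (x + 1) = logDeriv Gamma x + x⁻¹ := by
  have hshift : HasDerivAt (fun t => log (Gamma (t + 1))) (logDeriv Gamma (x + 1)) x :=
    (hasDerivAt_log_Gamma (by linarith)).comp_add_const x 1
  have hsplit : HasDerivAt (fun t => log t + log (Gamma t)) (x⁻¹ + logDeriv Gamma x) x :=
    (hasDerivAt_log hx.ne').add (hasDerivAt_log_Gamma hx)
  have heq : (fun t => log (Gamma (t + 1))) =ᶠ[𝓝 x] fun t => log t + log (Gamma t) := by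
    filter_upwards [lt_mem_nhds hx] with t ht
    rw [Gamma_add_one ht.ne', log_mul ht.ne' (Gamma_pos_of_pos ht).ne']
  rw [hshift.unique (hsplit.congr_of_eventuallyEq heq), add_comm]

lemma logDeriv_Gamma_le_log {x : ℝ} (hx : 0 < x) : logDeriv Gamma x ≤ log x := by
  have h := convexOn_log_Gamma.deriv_le_slope (mem_Ioi.mpr hx) (mem_Ioi.mpr (by linarith))
    (lt_add_one x) (hasDerivAt_log_Gamma hx).differentiableAt
  rwa [Function.comp_def, (hasDerivAt_log_Gamma hx).deriv, slope_def_field, add_sub_cancel_left,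
    div_one, Gamma_add_one hx.ne', log_mul hx.ne' (Gamma_pos_of_pos hx).ne',
    add_sub_cancel_right] at h

lemma log_add_one_sub_log_le {a : ℝ} (ha : 0 < a) :
    log (a + 1) - log a ≤ (a⁻¹ + (a + 1)⁻¹) / 2 := by
  have hratio : 1 ≤ (a + 1) / a := (one_le_div ha).mpr (by linarith)
  have h := self_le_sinh_iff.mpr (log_nonneg hratio)
  rw [sinh_log (by positivity), log_div (by positivity) ha.ne'] at h
  convert h using 1
  field_simp
  ring

lemma logDeriv_Gamma_le_log_sub {x : ℝ} (hx : 0 < x) :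
    logDeriv Gamma x ≤ log x - (2 * x)⁻¹ := by
  have hshifted : ∀ n : ℕ, ∀ y, 0 < y →
      logDeriv Gamma y ≤ log y - (2 * y)⁻¹ + (2 * (y + n))⁻¹ := by
    intro n
    induction n with
    | zero => intro y hy; simpa using logDeriv_Gamma_le_log hy
    | succ n ih =>
      intro y hy
      have hnext := ih (y + 1) (by linarith)
      rw [logDeriv_Gamma_add_one hy, add_right_comm y 1] at hnext
      rw [Nat.cast_succ, ← add_assoc]
      have htrap := log_add_one_sub_log_le hy
      simp only [mul_inv] at hnext ⊢
      linarith
  have hlim : Tendsto (fun n : ℕ => log x - (2 * x)⁻¹ + (2 * (x + n))⁻¹) atTop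
      (𝓝 (log x - (2 * x)⁻¹ + 0)) :=
    tendsto_const_nhds.add <| tendsto_inv_atTop_zero.comp <| Tendsto.const_mul_atTop two_pos <|
      tendsto_atTop_add_const_left _ x tendsto_natCast_atTop_atTop
  rw [add_zero] at hlim
  exact ge_of_tendsto' hlim fun n => hshifted n x hx

lemma logDeriv_Gamma_lt_log_sub_of_lt {x b : ℝ} (hx : 0 < x) (hxb : x < b) :
    logDeriv Gamma x < log b - (2 * (b - x) + 1) / (2 * b) := by
  have hb : 0 < b := hx.trans hxb
  have hψ := logDeriv_Gamma_le_log_sub hx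
  have hlog : log x - log b ≤ x / b - 1 := by
    rw [← log_div hx.ne' hb.ne']
    exact log_le_sub_one_of_pos (by positivity)
  have hinv : (2 * b)⁻¹ < (2 * x)⁻¹ := by gcongr
  have hsplit : (2 * (b - x) + 1) / (2 * b) = 1 - x / b + (2 * b)⁻¹ := by
    field_simp
  linarith

end Real

lemma strictMonoOn_log_Gamma_add_mul_log (N : ℝ) :
    StrictMonoOn (fun ξ => log (Gamma (N / 2 - ξ)) + ξ * log ((N - (1 + ξ)) / 2))
      (Ioo 1 (N / 2)) := by
  have hderiv : ∀ ξ ∈ Ioo 1 (N / 2),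
      HasDerivAt (fun ξ => log (Gamma (N / 2 - ξ)) + ξ * log ((N - (1 + ξ)) / 2))
        (-logDeriv Gamma (N / 2 - ξ) +
          (1 * log ((N - (1 + ξ)) / 2) + ξ * (-(1 / 2) / ((N - (1 + ξ)) / 2)))) ξ := by
    rintro ξ ⟨hξ₁, hξ₂⟩
    have hbase : HasDerivAt (fun ξ : ℝ => (N - (1 + ξ)) / 2) (-(1 / 2)) ξ := by
      simpa [neg_div] using (((hasDerivAt_id ξ).const_add 1).const_sub N).div_const 2
    exact ((hasDerivAt_log_Gamma (by linarith)).comp_const_sub (N / 2) ξ).add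
      ((hasDerivAt_id ξ).mul (hbase.log (by linarith)))
  refine strictMonoOn_of_deriv_pos (convex_Ioo _ _)
    (fun ξ hξ => (hderiv ξ hξ).continuousAt.continuousWithinAt) fun ξ hξ => ?_
  rw [interior_Ioo] at hξ
  rw [(hderiv ξ hξ).deriv]
  obtain ⟨hξ₁, hξ₂⟩ := hξ
  have hψ := logDeriv_Gamma_lt_log_sub_of_lt (x := N / 2 - ξ) (b := (N - (1 + ξ)) / 2)
    (by linarith) (by linarith)
  have hslope : (2 * ((N - (1 + ξ)) / 2 - (N / 2 - ξ)) + 1) / (2 * ((N - (1 + ξ)) / 2)) =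
      -(ξ * (-(1 / 2) / ((N - (1 + ξ)) / 2))) := by
    have hb : N - (1 + ξ) ≠ 0 := by linarith
    field_simp
    ring
  linarith

lemma strictMonoOn_Gamma_mul_rpow (N : ℝ) :
    StrictMonoOn (fun ξ => Gamma (N / 2 - ξ) * ((N - (1 + ξ)) / 2) ^ ξ) (Ioo 1 (N / 2)) := by
  refine (exp_strictMono.comp_strictMonoOn (strictMonoOn_log_Gamma_add_mul_log N)).congr ?_
  rintro ξ ⟨hξ₁, hξ₂⟩
  simp only [Function.comp_apply]
  rw [exp_add, exp_log (Gamma_pos_of_pos (by linarith)), rpow_def_of_pos (by linarith), mul_comm ξ]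

theorem stmt_4_general (N : ℝ)
    (f : ℝ → ℝ)
    (hf : ∀ ξ ∈ Set.Ioo 1 (N / 2),
      f ξ = (Real.Gamma (N / 2 - ξ) / Real.Gamma (N / 2)) * ((N - (1 + ξ)) / 2) ^ ξ) :
    StrictMonoOn f (Set.Ioo 1 (N / 2)) := by
  intro ξ₁ h₁ ξ₂ h₂ hlt
  have hΓ : 0 < Gamma (N / 2) := Gamma_pos_of_pos (by linarith [h₁.1, h₁.2])
  rw [hf ξ₁ h₁, hf ξ₂ h₂, div_mul_eq_mul_div, div_mul_eq_mul_div]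
  exact div_lt_div_of_pos_right (strictMonoOn_Gamma_mul_rpow N h₁ h₂ hlt) hΓ

theorem stmt_4 (N : ℝ) (hN : 2 < N)
    (f : ℝ → ℝ)
    (hf : ∀ ξ ∈ Set.Ioo 1 (N / 2),
      f ξ = (Real.Gamma (N / 2 - ξ) / Real.Gamma (N / 2)) * ((N - (1 + ξ)) / 2) ^ ξ) :
    StrictMonoOn f (Set.Ioo 1 (N / 2)) :=
  stmt_4_general N f hf
end
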